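/- arXiv:2201.04799 — 2 statements merged into one kernel-verified Lean document; each statement's English description precedes it below -/
import Mathlib

section
/- In a hyperpath H' from s to d (with s ≠ d), there is exactly one edge e in H' such that d ∈ H(e). -/
/-- A directed hypergraph: finite vertex set, finite set of hyperedges,
each hyperedge `e = (T_e, H_e)` with tail `T_e ⊆ V`, head `H_e ⊆ V \ T_e`. -/
structure DiHypergraph (V : Type*) [DecidableEq V] where
  verts : Finset V
  edges : Finset (Finset V × Finset V)
  tail_sub : ∀ e ∈ edges, e.1 ⊆ verts
  head_sub : ∀ e ∈ edges, e.2 ⊆ verts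
  disj : ∀ e ∈ edges, Disjoint e.1 e.2

variable {V : Type*} [DecidableEq V]

/-- Subhypergraph relation. -/
def Subhg (H' H : DiHypergraph V) : Prop :=
  H'.verts ⊆ H.verts ∧ H'.edges ⊆ H.edges

/-- Union of the heads of a list of hyperedges. -/
def headsUnion (L : List (Finset V × Finset V)) : Finset V :=
  L.foldr (fun e acc => e.2 ∪ acc) ∅

/-- The hyperedges of `H'` can be ordered `⟨e_1, …, e_k⟩` so that
`T(e_i) ⊆ {s} ∪ H(e_1) ∪ ⋯ ∪ H(e_{i-1})` and `d ∈ H(e_k)`. -/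
def HasOrdering (H' : DiHypergraph V) (s d : V) : Prop :=
  ∃ L : List (Finset V × Finset V), L.Nodup ∧ L.toFinset = H'.edges ∧
    (∀ i : Fin L.length, (L.get i).1 ⊆ insert s (headsUnion (L.take (i : ℕ)))) ∧
    ∃ e, L.getLast? = some e ∧ d ∈ e.2

/-- A hyperpath from `s` to `d` in `H` is a subhypergraph of `H`, minimal with
respect to deletion of vertices and edges, admitting a valid edge ordering. -/
def IsHyperpath (H : DiHypergraph V) (s d : V) (H' : DiHypergraph V) : Prop :=
  Subhg H' H ∧ HasOrdering H' s d ∧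
    ∀ H'' : DiHypergraph V, Subhg H'' H' → HasOrdering H'' s d → H'' = H'

/-- `PathFrom H s d vs es` : `vs` and `es` form a (simple graph-style) path
`(v₁ = s, e₁, v₂, …, e_q, v_{q+1} = d)` with `vᵢ ∈ T(eᵢ)`, `v_{i+1} ∈ H(eᵢ)`,
all edges taken from `H`. -/
inductive PathFrom (H : DiHypergraph V) : V → V → List V → List (Finset V × Finset V) → Prop
  | single {s d : V} {e : Finset V × Finset V} :
      e ∈ H.edges → s ∈ e.1 → d ∈ e.2 → PathFrom H s d [s, d] [e]
  | cons {s v d : V} {vs : List V} {es : List (Finset V × Finset V)}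
      {e : Finset V × Finset V} :
      e ∈ H.edges → s ∈ e.1 → v ∈ e.2 → PathFrom H v d vs es →
      PathFrom H s d (s :: vs) (e :: es)

/-! If `d` lay in the head of an edge `e_i`, `i < k`, of an ordering `⟨e_1, …, e_k⟩`, the
prefix `⟨e_1, …, e_i⟩` would again be an ordering from `s` to `d`, so the subhypergraph keeping
only its edges would contradict minimality. Hence only `e_k` has `d` in its head. -/

namespace DiHypergraph

def restrictEdges (G : DiHypergraph V) (F : Finset (Finset V × Finset V)) (hF : F ⊆ G.edges) :
    DiHypergraph V where
  verts := G.verts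
  edges := F
  tail_sub e he := G.tail_sub e (hF he)
  head_sub e he := G.head_sub e (hF he)
  disj e he := G.disj e (hF he)

theorem subhg_restrictEdges (G : DiHypergraph V) {F : Finset (Finset V × Finset V)}
    (hF : F ⊆ G.edges) : Subhg (G.restrictEdges F hF) G :=
  ⟨subset_rfl, hF⟩

theorem hasOrdering_restrictEdges_take {G : DiHypergraph V} {s d : V}
    {L : List (Finset V × Finset V)} (hnd : L.Nodup) (hL : L.toFinset = G.edges)
    (hord : ∀ i : Fin L.length, (L.get i).1 ⊆ insert s (headsUnion (L.take (i : ℕ))))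
    {i : ℕ} (hi : i < L.length) (hd : d ∈ L[i].2) :
    HasOrdering (G.restrictEdges (L.take (i + 1)).toFinset
      (hL ▸ Multiset.toFinset_subset.2 (List.take_sublist _ _).subset)) s d := by
  refine ⟨L.take (i + 1), hnd.sublist (List.take_sublist _ _), rfl, fun ⟨j, hj⟩ => ?_,
    L[i], ?_, hd⟩
  · rw [List.length_take] at hj
    have hjL : j < L.length := by omega
    have htake : (L.take (i + 1)).take j = L.take j := by
      rw [List.take_take, min_eq_left (by omega)]
    simpa [htake] using hord ⟨j, hjL⟩
  · simp [List.getLast?_take, List.getElem?_eq_getElem hi]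

end DiHypergraph

theorem List.Nodup.length_le_of_toFinset_take_eq {α : Type*} [DecidableEq α] {L : List α}
    (hnd : L.Nodup) {n : ℕ} (h : (L.take n).toFinset = L.toFinset) : L.length ≤ n := by
  have := congrArg Finset.card h
  rw [List.toFinset_card_of_nodup (hnd.sublist (List.take_sublist _ _)),
    List.toFinset_card_of_nodup hnd, List.length_take] at this
  omega

theorem IsHyperpath.add_one_eq_length_of_mem_head {H G : DiHypergraph V} {s d : V}
    (hp : IsHyperpath H s d G) {L : List (Finset V × Finset V)} (hnd : L.Nodup)
    (hL : L.toFinset = G.edges)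
    (hord : ∀ i : Fin L.length, (L.get i).1 ⊆ insert s (headsUnion (L.take (i : ℕ))))
    {i : ℕ} (hi : i < L.length) (hd : d ∈ L[i].2) : i + 1 = L.length := by
  have hprefix := DiHypergraph.hasOrdering_restrictEdges_take hnd hL hord hi hd
  have hedges := congrArg DiHypergraph.edges (hp.2.2 _ (G.subhg_restrictEdges _) hprefix)
  have := hnd.length_le_of_toFinset_take_eq (hedges.trans hL.symm)
  omega

theorem hyperpath_unique_last_edge_general (H H' : DiHypergraph V) (s d : V)
    (hp : IsHyperpath H s d H') :
    ∃! e : Finset V × Finset V, e ∈ H'.edges ∧ d ∈ e.2 := by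
  obtain ⟨L, hnd, hL, hord, e, hlast, hde⟩ := hp.2.1
  have hlen : 0 < L.length := List.length_pos_of_mem (List.mem_of_getLast? hlast)
  have he : L[L.length - 1] = e := by
    rw [List.getLast?_eq_getElem?, List.getElem?_eq_getElem (by omega)] at hlast
    exact Option.some.inj hlast
  refine ⟨e, ⟨hL ▸ List.mem_toFinset.2 (List.mem_of_getLast? hlast), hde⟩, ?_⟩
  rintro f ⟨hf, hdf⟩
  obtain ⟨i, hi, rfl⟩ := List.mem_iff_getElem.1 (List.mem_toFinset.1 (hL ▸ hf))
  have := hp.add_one_eq_length_of_mem_head hnd hL hord hi hdf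
  obtain rfl : i = L.length - 1 := by omega
  exact he

/-- In a hyperpath `H'` from `s` to `d` (with `s ≠ d`), there is exactly one
edge `e` in `H'` such that `d ∈ H(e)`. -/
theorem hyperpath_unique_last_edge (H H' : DiHypergraph V) (s d : V) (hsd : s ≠ d)
    (hp : IsHyperpath H s d H') :
    ∃! e : Finset V × Finset V, e ∈ H'.edges ∧ d ∈ e.2 :=
  hyperpath_unique_last_edge_general H H' s d hp
end

section
/- In a B-hypergraph (every edge has head of size exactly one), the reversal operation that swaps tail and head of every edge produces an F-hypergraph, and it maps paths from s to d to paths from d to s; however, it does not in general map hyperpaths to hyperpaths: there exists a B-hypergraph H and a hyperpath from s to d in H whose edge-reversal is not a hyperpath from d to s in the reversed hypergraph. -/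
variable {V : Type*} [DecidableEq V]

/-- Reversal of a directed hypergraph: every edge `(T, H)` becomes `(H, T)`. -/
def reverseHg (H : DiHypergraph V) : DiHypergraph V where
  verts := H.verts
  edges := H.edges.image fun e => (e.2, e.1)
  tail_sub := by
    intro e he
    simp only [Finset.mem_image] at he
    obtain ⟨e', he', rfl⟩ := he
    exact H.head_sub e' he'
  head_sub := by
    intro e he
    simp only [Finset.mem_image] at he
    obtain ⟨e', he', rfl⟩ := he
    exact H.tail_sub e' he'
  disj := by
    intro e he
    simp only [Finset.mem_image] at he
    obtain ⟨e', he', rfl⟩ := he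
    exact (H.disj e' he').symm

lemma DiHypergraph.ext' {H1 H2 : DiHypergraph V} (h1 : H1.verts = H2.verts)
    (h2 : H1.edges = H2.edges) : H1 = H2 := by
  cases H1; cases H2; simp_all

lemma mem_headsUnion {x : V} {L : List (Finset V × Finset V)} :
    x ∈ headsUnion L ↔ ∃ e ∈ L, x ∈ e.2 := by
  induction L with
  | nil => simp [headsUnion]
  | cons a t ih => simp [headsUnion, List.foldr] at ih ⊢; rw [ih]

lemma PathFrom.snoc {H : DiHypergraph V} {a b c : V} {vs : List V}
    {es : List (Finset V × Finset V)} {f : Finset V × Finset V}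
    (h : PathFrom H a b vs es) (hf : f ∈ H.edges) (hb : b ∈ f.1) (hc : c ∈ f.2) :
    PathFrom H a c (vs ++ [c]) (es ++ [f]) := by
  induction h with
  | single he hs hd => exact PathFrom.cons he hs hd (PathFrom.single hf hb hc)
  | cons he hs hv _ ih => exact PathFrom.cons he hs hv (ih hb)

def exA : Finset ℕ × Finset ℕ := ({0}, {1})
def exB : Finset ℕ × Finset ℕ := ({0, 1}, {2})

def Hex : DiHypergraph ℕ where
  verts := {0, 1, 2}
  edges := {exA, exB}
  tail_sub := by intro e he; simp [exA, exB] at he; rcases he with rfl | rfl <;> decide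
  head_sub := by intro e he; simp [exA, exB] at he; rcases he with rfl | rfl <;> decide
  disj := by intro e he; simp [exA, exB] at he; rcases he with rfl | rfl <;> decide

def Hcex : DiHypergraph ℕ where
  verts := {0, 1, 2}
  edges := {({2}, {0, 1})}
  tail_sub := by intro e he; simp at he; subst he; decide
  head_sub := by intro e he; simp at he; subst he; decide
  disj := by intro e he; simp at he; subst he; decide

/-- Reversing a B-hypergraph yields an F-hypergraph and maps paths from `s` to
`d` to paths from `d` to `s`; but it does not in general map hyperpaths to
hyperpaths: there is a B-hypergraph `H` and a hyperpath `H'` from `s` to `d`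
in it whose reversal is not a hyperpath from `d` to `s` in `reverseHg H`. -/
theorem reverse_b_hypergraph :
    (∀ (H : DiHypergraph V), (∀ e ∈ H.edges, e.2.card = 1) →
      ∀ e ∈ (reverseHg H).edges, e.1.card = 1) ∧
    (∀ (H : DiHypergraph V) (s d : V) (vs : List V)
        (es : List (Finset V × Finset V)), PathFrom H s d vs es →
      PathFrom (reverseHg H) d s vs.reverse
        ((es.map fun e => (e.2, e.1)).reverse)) ∧
    (∃ (H H' : DiHypergraph ℕ) (s d : ℕ),
      (∀ e ∈ H.edges, e.2.card = 1) ∧ IsHyperpath H s d H' ∧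
      ¬ IsHyperpath (reverseHg H) d s (reverseHg H')) := by
  refine ⟨?_, ?_, ?_⟩
  · intro H hB e he
    simp only [reverseHg, Finset.mem_image] at he
    obtain ⟨e', he', rfl⟩ := he
    exact hB e' he'
  · intro H s d vs es h
    induction h with
    | single he hs hd =>
        simp only [List.map_cons, List.map_nil, List.reverse_cons, List.reverse_nil,
          List.nil_append, List.cons_append]
        exact PathFrom.single (Finset.mem_image_of_mem _ he) hd hs
    | cons he hs hv _ ih =>
        simp only [List.map_cons, List.reverse_cons]
        exact ih.snoc (Finset.mem_image_of_mem _ he) hv hs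
  · refine ⟨Hex, Hex, 0, 2, ?_, ⟨⟨le_refl _, le_refl _⟩, ?_, ?_⟩, ?_⟩
    · intro e he
      simp [Hex, exA, exB] at he
      rcases he with rfl | rfl <;> decide
    · exact ⟨[exA, exB], by decide, by decide, by decide, exB, by decide, by decide⟩
    · rintro H'' ⟨hv, he⟩ ⟨L, hnd, htf, htail, f, hlast, hd⟩
      have hfL : f ∈ L := List.mem_of_mem_getLast? (by simp [hlast])
      have hfE : f ∈ Hex.edges := he (htf ▸ List.mem_toFinset.mpr hfL)
      have hfB : f = exB := by
        simp only [Hex, Finset.mem_insert, Finset.mem_singleton] at hfE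
        rcases hfE with rfl | rfl
        · exact absurd hd (by decide)
        · rfl
      subst hfB
      have hBE : exB ∈ H''.edges := htf ▸ List.mem_toFinset.mpr hfL
      obtain ⟨i, hi⟩ := List.mem_iff_get.mp hfL
      have h1 : (1 : ℕ) ∈ insert 0 (headsUnion (L.take (i : ℕ))) :=
        htail i (by rw [hi]; decide)
      have h1' : (1 : ℕ) ∈ headsUnion (L.take (i : ℕ)) := by
        rcases Finset.mem_insert.mp h1 with h | h
        · exact absurd h (by decide)
        · exact h
      obtain ⟨g, hgL, hg1⟩ := mem_headsUnion.mp h1'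
      have hgE' : g ∈ H''.edges :=
        htf ▸ List.mem_toFinset.mpr (List.mem_of_mem_take hgL)
      have hgE : g ∈ Hex.edges := he hgE'
      have hgA : g = exA := by
        simp only [Hex, Finset.mem_insert, Finset.mem_singleton] at hgE
        rcases hgE with rfl | rfl
        · rfl
        · exact absurd hg1 (by decide)
      subst hgA
      have hedges : H''.edges = Hex.edges := by
        refine Finset.Subset.antisymm he ?_
        intro x hx
        simp only [Hex, Finset.mem_insert, Finset.mem_singleton] at hx
        rcases hx with rfl | rfl
        · exact hgE'
        · exact hBE
      have hverts : H''.verts = Hex.verts := by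
        refine Finset.Subset.antisymm hv ?_
        intro x hx
        simp only [Hex, Finset.mem_insert, Finset.mem_singleton] at hx
        rcases hx with rfl | rfl | rfl
        · exact H''.tail_sub exA hgE' (by decide)
        · exact H''.head_sub exA hgE' (by decide)
        · exact H''.head_sub exB hBE (by decide)
      exact DiHypergraph.ext' hverts hedges
    · rintro ⟨-, -, hmin⟩
      have hsub : Subhg Hcex (reverseHg Hex) := by
        constructor
        · decide
        · decide
      have hord : HasOrdering Hcex 2 0 :=
        ⟨[({2}, {0, 1})], by decide, by decide, by decide, ({2}, {0, 1}), by decide, by decide⟩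
      have h := hmin Hcex hsub hord
      exact absurd (congrArg DiHypergraph.edges h) (by decide)
end
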